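/- arXiv:2012.14239 — 3 statements merged into one kernel-verified Lean document; each statement's English description precedes it below -/
import Mathlib

section
/- For all ξ, η, τ, ρ ∈ ℝ² (for the spatial variables) and τ, ρ ∈ ℝ (temporal), one has the 'hyperbolic Leibniz rule': ||τ| - |ξ|| ≤ ||ρ| - |η|| + ||τ - ρ| - |ξ - η|| + b±(ξ,η), where b₊(ξ,η) = |η| + |ξ - η| - |ξ| and b₋(ξ,η) = |ξ| - ||η| - |ξ - η||, for each choice of sign ±. -/
open MeasureTheory

/-- Hyperbolic Leibniz rule: for all temporal frequencies τ, ρ ∈ ℝ and spatial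
frequencies ξ, η ∈ ℝ², up to a universal constant,
||τ|-|ξ|| ≲ ||ρ|-|η|| + ||τ-ρ|-|ξ-η|| + b±(ξ,η) for one of the signs ±, where
b₊(ξ,η) = |η| + |ξ-η| - |ξ| and b₋(ξ,η) = |ξ| - ||η|-|ξ-η||. -/
theorem hyperbolic_leibniz_rule :
    ∃ C : ℝ, 0 < C ∧ ∀ (τ ρ : ℝ) (ξ η : EuclideanSpace ℝ (Fin 2)),
      (|(|τ|) - ‖ξ‖| ≤ C * (|(|ρ|) - ‖η‖| + |(|τ - ρ|) - ‖ξ - η‖| +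
          (‖η‖ + ‖ξ - η‖ - ‖ξ‖))) ∨
      (|(|τ|) - ‖ξ‖| ≤ C * (|(|ρ|) - ‖η‖| + |(|τ - ρ|) - ‖ξ - η‖| +
          (‖ξ‖ - |‖η‖ - ‖ξ - η‖|))) := by
  refine ⟨1, one_pos, fun τ ρ ξ η => ?_⟩
  have h1 : |τ| ≤ |ρ| + |τ - ρ| := by
    calc |τ| = |ρ + (τ - ρ)| := by ring_nf
    _ ≤ |ρ| + |τ - ρ| := abs_add_le _ _
  have h2 : |ρ| - |τ - ρ| ≤ |τ| := by
    have := abs_sub_abs_le_abs_sub ρ τ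
    rw [abs_sub_comm] at this; linarith
  have h3 : |τ - ρ| - |ρ| ≤ |τ| := by
    have := abs_sub_abs_le_abs_sub (τ - ρ) τ
    have h' : |τ - ρ - τ| = |ρ| := by rw [abs_sub_comm]; ring_nf
    linarith [this, h'.le, h'.ge]
  have hx : ‖ξ‖ ≤ ‖η‖ + ‖ξ - η‖ := by
    calc ‖ξ‖ = ‖η + (ξ - η)‖ := by rw [show η + (ξ - η) = ξ from by abel]
    _ ≤ ‖η‖ + ‖ξ - η‖ := norm_add_le _ _
  have hy : ‖η‖ - ‖ξ - η‖ ≤ ‖ξ‖ := by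
    have := norm_sub_norm_le η ξ
    rw [norm_sub_rev] at this; linarith
  have hz : ‖ξ - η‖ - ‖η‖ ≤ ‖ξ‖ := by
    have := norm_sub_norm_le (ξ - η) ξ
    have h' : ‖ξ - η - ξ‖ = ‖η‖ := by rw [show ξ - η - ξ = -η from by abel, norm_neg]
    linarith [this, h'.le, h'.ge]
  have ha := le_abs_self (|ρ| - ‖η‖)
  have ha' := neg_abs_le (|ρ| - ‖η‖)
  have hb := le_abs_self (|τ - ρ| - ‖ξ - η‖)
  have hb' := neg_abs_le (|τ - ρ| - ‖ξ - η‖)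
  have hc := le_abs_self (‖η‖ - ‖ξ - η‖)
  have hc' := neg_abs_le (‖η‖ - ‖ξ - η‖)
  rcases le_total |τ| ‖ξ‖ with h | h
  · right
    rw [one_mul, abs_sub_le_iff]
    constructor
    · rcases abs_cases (‖η‖ - ‖ξ - η‖) with ⟨he, _⟩ | ⟨he, _⟩ <;> linarith
    · rcases abs_cases (‖η‖ - ‖ξ - η‖) with ⟨he, _⟩ | ⟨he, _⟩ <;> linarith
  · left
    rw [one_mul, abs_sub_le_iff]
    constructor <;> linarith
end

section
/- For nonzero η ∈ ℝ² and ξ ∈ ℝ² with ξ ≠ η, the null form bound |η₁(ξ-η)₂ - η₂(ξ-η)₁| / (|η| |ξ-η|) ≲ |ξ|^{1/2} (|η| + |ξ-η| - |ξ|)^{1/2} / (|η|^{1/2} |ξ-η|^{1/2}) holds. -/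
/-!
Write `a = ‖η‖`, `b = ‖ξ - η‖`, `c = ‖ξ‖` and let `q` be the cross product of `η` and `ξ - η`.
Lagrange's identity `q² + ⟪η, ξ - η⟫² = a²b²` together with the polarization of `c²` gives
Heron's formula `4q² = ((a + b)² - c²)(c² - (a - b)²)`. Its first factor carries `a + b - c`, and
the rest is at most `16abc` as soon as `c ≤ a + b`; so `q² ≤ 4abc(a + b - c)`, which is the bound
with `C = 2` after taking square roots.
-/

open Real RealInnerProductSpace

lemma sq_cross_add_sq_inner (u v : EuclideanSpace ℝ (Fin 2)) :
    (u 0 * v 1 - u 1 * v 0) ^ 2 + ⟪u, v⟫ ^ 2 = ‖u‖ ^ 2 * ‖v‖ ^ 2 := by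
  simp only [EuclideanSpace.inner_eq_star_dotProduct, dotProduct, Pi.star_apply, star_trivial,
    Fin.sum_univ_two, EuclideanSpace.norm_sq_eq, norm_eq_abs, sq_abs]
  ring

lemma four_mul_sq_norm_mul_sq_norm_sub_sq_inner {E : Type*} [NormedAddCommGroup E]
    [InnerProductSpace ℝ E] (u v : E) :
    4 * (‖u‖ ^ 2 * ‖v‖ ^ 2 - ⟪u, v⟫ ^ 2) =
      ((‖u‖ + ‖v‖) ^ 2 - ‖u + v‖ ^ 2) * (‖u + v‖ ^ 2 - (‖u‖ - ‖v‖) ^ 2) := by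
  rw [norm_add_sq_real]
  ring

lemma heron_product_le {a b c : ℝ} (ha : 0 ≤ a) (hb : 0 ≤ b) (hc : 0 ≤ c) (hcab : c ≤ a + b) :
    ((a + b) ^ 2 - c ^ 2) * (c ^ 2 - (a - b) ^ 2) ≤ 16 * (a * b) * (c * (a + b - c)) := by
  have hz : 0 ≤ a + b - c := by linarith
  have h : (a + b + c) * (c ^ 2 - (a - b) ^ 2) ≤ 16 * a * b * c := by
    nlinarith [mul_nonneg (mul_nonneg ha hb) hc, mul_nonneg (mul_nonneg hz hc) hc,
      mul_nonneg hz (sq_nonneg (a - b)), mul_nonneg hc (sq_nonneg (a - b))]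
  calc ((a + b) ^ 2 - c ^ 2) * (c ^ 2 - (a - b) ^ 2)
      = (a + b - c) * ((a + b + c) * (c ^ 2 - (a - b) ^ 2)) := by ring
    _ ≤ (a + b - c) * (16 * a * b * c) := mul_le_mul_of_nonneg_left h hz
    _ = 16 * (a * b) * (c * (a + b - c)) := by ring

lemma abs_div_mul_le_of_sq_le {q a b c z : ℝ} (ha : 0 < a) (hb : 0 < b) (hc : 0 ≤ c)
    (hz : 0 ≤ z) (h : q ^ 2 ≤ 4 * (a * b) * (c * z)) :
    |q| / (a * b) ≤ 2 * (√c * √z / (√a * √b)) := by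
  have hab : 0 < a * b := mul_pos ha hb
  have e : 2 * (√c * √z / (√a * √b)) = √(4 * (c * z) / (a * b)) := by
    have h4 : √(4 : ℝ) = 2 := by
      rw [show (4 : ℝ) = 2 ^ 2 by norm_num, sqrt_sq (by norm_num)]
    rw [← h4, ← sqrt_mul hc, ← sqrt_mul ha.le, mul_div_assoc', ← sqrt_mul (by norm_num),
      ← sqrt_div' _ hab.le]
  rw [e, le_sqrt (by positivity) (by positivity), div_pow, sq_abs,
    div_le_div_iff₀ (by positivity) hab]
  calc q ^ 2 * (a * b) ≤ 4 * (a * b) * (c * z) * (a * b) := mul_le_mul_of_nonneg_right h hab.le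
    _ = 4 * (c * z) * (a * b) ^ 2 := by ring

/-- Foschi–Klainerman elliptic null symbol bound: for η ≠ 0, ξ ≠ η in ℝ²,
|η₁(ξ-η)₂ - η₂(ξ-η)₁|/(|η||ξ-η|)
  ≲ |ξ|^(1/2) (|η|+|ξ-η|-|ξ|)^(1/2) / (|η|^(1/2)|ξ-η|^(1/2)). -/
theorem nullform_elliptic_bound :
    ∃ C : ℝ, 0 < C ∧ ∀ (η ξ : EuclideanSpace ℝ (Fin 2)), η ≠ 0 → ξ ≠ η →
      |η 0 * (ξ - η) 1 - η 1 * (ξ - η) 0| / (‖η‖ * ‖ξ - η‖) ≤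
        C * (Real.sqrt ‖ξ‖ * Real.sqrt (‖η‖ + ‖ξ - η‖ - ‖ξ‖)
          / (Real.sqrt ‖η‖ * Real.sqrt ‖ξ - η‖)) := by
  refine ⟨2, two_pos, fun η ξ hη hξ => ?_⟩
  have ha : 0 < ‖η‖ := norm_pos_iff.mpr hη
  have hb : 0 < ‖ξ - η‖ := norm_pos_iff.mpr (sub_ne_zero.mpr hξ)
  have htri : ‖ξ‖ ≤ ‖η‖ + ‖ξ - η‖ := norm_le_norm_add_norm_sub' ξ η
  have heron := four_mul_sq_norm_mul_sq_norm_sub_sq_inner η (ξ - η)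
  rw [add_sub_cancel] at heron
  have lagrange := sq_cross_add_sq_inner η (ξ - η)
  refine abs_div_mul_le_of_sq_le ha hb (norm_nonneg ξ) (by linarith) ?_
  linarith [heron_product_le ha.le hb.le (norm_nonneg ξ) htri]
end

section
/- (Symbol decomposition for the Q_{i0} null form) For ξ, η ∈ ℝ² and signs ±₁, ±₂, the symbol m(ξ,η) = -(±₂(ξ-η)_i) ±₁ η_i ⟨η⟩^{-1} ⟨ξ-η⟩ satisfies |m(ξ,η)| ≲ (|ξ-η| |η| / ⟨η⟩) ∠(±₁η, ±₂(ξ-η)) + |ξ-η|/⟨η⟩ + 1, where ∠ denotes the angle between the (signed) vectors. -/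
open InnerProductGeometry

lemma comp_le_norm (v : EuclideanSpace ℝ (Fin 2)) (i : Fin 2) : |v i| ≤ ‖v‖ := by
  rw [EuclideanSpace.norm_eq, ← Real.sqrt_sq_eq_abs]
  apply Real.sqrt_le_sqrt
  calc v i ^ 2 ≤ ∑ j, ‖v j‖ ^ 2 := by
        refine Finset.single_le_sum (fun j _ => by positivity) (Finset.mem_univ i) |>.trans_eq' ?_
        rw [Real.norm_eq_abs, sq_abs]
  _ = _ := rfl

lemma null_angle_bound (a b : EuclideanSpace ℝ (Fin 2)) (i : Fin 2) :
    |a i * ‖b‖ - b i * ‖a‖| ≤ ‖a‖ * ‖b‖ * angle a b := by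
  have h1 : a i * ‖b‖ - b i * ‖a‖ = (‖b‖ • a - ‖a‖ • b) i := by
    simp [PiLp.sub_apply, PiLp.smul_apply, smul_eq_mul]; ring
  rw [h1]
  refine (comp_le_norm _ i).trans ?_
  have hsq : ‖‖b‖ • a - ‖a‖ • b‖ ^ 2 ≤ (‖a‖ * ‖b‖ * angle a b) ^ 2 := by
    rw [norm_sub_sq_real, real_inner_smul_left, real_inner_smul_right,
      ← InnerProductGeometry.cos_angle_mul_norm_mul_norm]
    have hcos : 1 - (angle a b) ^ 2 / 2 ≤ Real.cos (angle a b) :=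
      Real.one_sub_sq_div_two_le_cos
    have h2 : ‖‖b‖ • a‖ ^ 2 = ‖b‖ ^ 2 * ‖a‖ ^ 2 := by
      rw [norm_smul]; simp [mul_pow]
    have h3 : ‖‖a‖ • b‖ ^ 2 = ‖a‖ ^ 2 * ‖b‖ ^ 2 := by
      rw [norm_smul]; simp [mul_pow]
    rw [h2, h3]
    nlinarith [norm_nonneg a, norm_nonneg b, sq_nonneg (‖a‖ * ‖b‖)]
  have hnn : 0 ≤ ‖a‖ * ‖b‖ * angle a b := by
    have := InnerProductGeometry.angle_nonneg a b
    positivity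
  nlinarith [norm_nonneg (‖b‖ • a - ‖a‖ • b)]

lemma gauss_facts (x : ℝ) (hx : 0 ≤ x) :
    1 ≤ Real.sqrt (1 + x ^ 2) ∧ x ≤ Real.sqrt (1 + x ^ 2) ∧
      Real.sqrt (1 + x ^ 2) ≤ x + 1 := by
  have h0 : (0:ℝ) ≤ 1 + x ^ 2 := by positivity
  have hs := Real.sq_sqrt h0
  have hn := Real.sqrt_nonneg (1 + x ^ 2)
  refine ⟨by nlinarith, by nlinarith, by nlinarith⟩

/-- Symbol decomposition for the Q_{i0} null form: for signs ±₁, ±₂ and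
frequencies ξ, η ∈ ℝ² (with η ≠ 0, ξ - η ≠ 0), the symbol
m(ξ,η) = -(±₂(ξ-η)_i) ±₁ η_i ⟨η⟩^{-1}⟨ξ-η⟩ satisfies
|m(ξ,η)| ≲ (|ξ-η||η|/⟨η⟩)∠(±₁η, ±₂(ξ-η)) + |ξ-η|/⟨η⟩ + 1. -/
theorem Qi0_symbol_decomposition (i : Fin 2) (s₁ s₂ : ℝ)
    (hs₁ : s₁ = 1 ∨ s₁ = -1) (hs₂ : s₂ = 1 ∨ s₂ = -1) :
    ∃ C : ℝ, 0 < C ∧ ∀ ξ η : EuclideanSpace ℝ (Fin 2), η ≠ 0 → ξ - η ≠ 0 →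
      |(-(s₂ * (ξ - η) i)) + s₁ * η i * (1 + ‖η‖ ^ 2) ^ (-(1 / 2) : ℝ) *
          (1 + ‖ξ - η‖ ^ 2) ^ ((1 : ℝ) / 2)| ≤
        C * ((‖ξ - η‖ * ‖η‖ / (1 + ‖η‖ ^ 2) ^ ((1 : ℝ) / 2)) *
              angle (s₁ • η) (s₂ • (ξ - η)) +
            ‖ξ - η‖ / (1 + ‖η‖ ^ 2) ^ ((1 : ℝ) / 2) + 1) := by
  refine ⟨1, one_pos, fun ξ η hη hξη => ?_⟩
  have habs1 : |s₁| = 1 := by rcases hs₁ with h | h <;> simp [h]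
  have habs2 : |s₂| = 1 := by rcases hs₂ with h | h <;> simp [h]
  set a : EuclideanSpace ℝ (Fin 2) := s₁ • η with ha
  set b : EuclideanSpace ℝ (Fin 2) := s₂ • (ξ - η) with hb
  set x := ‖η‖ with hx
  set y := ‖ξ - η‖ with hy
  have hx0 : 0 ≤ x := norm_nonneg _
  have hy0 : 0 ≤ y := norm_nonneg _
  set A := Real.sqrt (1 + x ^ 2) with hA
  set B := Real.sqrt (1 + y ^ 2) with hB
  obtain ⟨hA1, hxA, hAx⟩ := gauss_facts x hx0
  obtain ⟨hB1, hyB, hBy⟩ := gauss_facts y hy0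
  rw [← hA] at hA1 hxA hAx
  rw [← hB] at hB1 hyB hBy
  have hA0 : 0 < A := lt_of_lt_of_le one_pos hA1
  have hrA : (1 + x ^ 2) ^ ((1:ℝ)/2) = A := by
    rw [hA, Real.sqrt_eq_rpow]
  have hrB : (1 + y ^ 2) ^ ((1:ℝ)/2) = B := by
    rw [hB, Real.sqrt_eq_rpow]
  have hrAinv : (1 + x ^ 2) ^ (-(1/2) : ℝ) = A⁻¹ := by
    rw [Real.rpow_neg (by positivity), hrA]
  have hna : ‖a‖ = x := by rw [ha, norm_smul]; simp [habs1, hx]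
  have hnb : ‖b‖ = y := by rw [hb, norm_smul]; simp [habs2, hy]
  have hai : a i = s₁ * η i := rfl
  have hbi : b i = s₂ * (ξ - η) i := rfl
  set θ := angle a b with hθ
  have hθ0 : 0 ≤ θ := InnerProductGeometry.angle_nonneg a b
  have h1 : |a i * y - b i * x| ≤ x * y * θ := by
    have h := null_angle_bound a b i
    rw [hna, hnb, ← hθ] at h
    exact h
  have h2 : |a i| ≤ x := by rw [← hna]; exact comp_le_norm a i
  have h3 : |b i| ≤ y := by rw [← hnb]; exact comp_le_norm b i
  have h4 : |a i * (B - y)| ≤ x := by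
    rw [abs_mul]
    have hBy' : |B - y| ≤ 1 := by rw [abs_of_nonneg (by linarith)]; linarith
    calc |a i| * |B - y| ≤ x * 1 := mul_le_mul h2 hBy' (abs_nonneg _) hx0
      _ = x := mul_one x
  have h5 : |b i * (A - x)| ≤ y := by
    rw [abs_mul]
    have hAx' : |A - x| ≤ 1 := by rw [abs_of_nonneg (by linarith)]; linarith
    calc |b i| * |A - x| ≤ y * 1 := mul_le_mul h3 hAx' (abs_nonneg _) hy0
      _ = y := mul_one y
  have hkey : |a i * B - b i * A| ≤ x * y * θ + x + y := by
    have hre : a i * B - b i * A =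
        (a i * y - b i * x) + a i * (B - y) + (-(b i * (A - x))) := by ring
    rw [hre]
    have htri := abs_add_three (a i * y - b i * x) (a i * (B - y)) (-(b i * (A - x)))
    rw [abs_neg] at htri
    linarith
  have hm : (-(s₂ * (ξ - η) i)) + s₁ * η i * (1 + x ^ 2) ^ (-(1/2) : ℝ) *
      (1 + y ^ 2) ^ ((1:ℝ)/2) = A⁻¹ * (a i * B - b i * A) := by
    rw [hrAinv, hrB, ← hai, ← hbi]
    field_simp
    ring
  rw [hm, hrA, abs_mul, abs_inv, abs_of_pos hA0, one_mul]
  have hxAi : x * A⁻¹ ≤ 1 := by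
    rw [← div_eq_mul_inv, div_le_one hA0]; exact hxA
  have hAinv0 : 0 ≤ A⁻¹ := by positivity
  have hmul := mul_le_mul_of_nonneg_left hkey hAinv0
  have hdiv1 : y * x / A * θ = x * y * θ * A⁻¹ := by rw [div_eq_mul_inv]; ring
  have hdiv2 : y / A = y * A⁻¹ := div_eq_mul_inv y A
  rw [hdiv1, hdiv2]
  have hexp : A⁻¹ * (x * y * θ + x + y) = x * y * θ * A⁻¹ + x * A⁻¹ + y * A⁻¹ := by ring
  linarith
end
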